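/- Suppose the weight functions of two singular hermitian metrics on isomorphic line bundles over Z \ B differ, in local coordinates adapted to a smooth hypersurface B = {z¹ = 0}, by χ = β log|z¹|² + 2Re(a(z')/z¹) where a is holomorphic on B ∩ U. If χ is bounded above by C(1 + |log|z¹||) near every point of B (i.e. -log of the metric has at worst logarithmic poles along B), then a ≡ 0; consequently the associated current T_v vanishes and the Chern current difference equals β[B]. -/

import Mathlib

open MeasureTheory

/-- The unit polydisk. -/
def pd15 (m : ℕ) : Set (Fin m → ℂ) := {z | ∀ i, ‖z i‖ < 1}

/-!
Along the ray `w = t e^{i arg c}` the term `2 Re (c / w) = 2‖c‖ / t` blows up like `1 / t`,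
while the logarithmic terms only grow like `-log t`; multiplying by `t` gives
`2‖c‖ ≤ K t (1 - log t)` for some constant `K`, and the right side tends to `0` as `t → 0⁺`.
-/

open Filter Topology Real

lemma tendsto_add_negMulLog_nhdsGT_zero :
    Tendsto (fun t : ℝ ↦ t + negMulLog t) (𝓝[>] 0) (𝓝 0) := by
  have h : Tendsto (fun t : ℝ ↦ t + negMulLog t) (𝓝 0) (𝓝 (0 + negMulLog 0)) :=
    (continuous_id.add continuous_negMulLog).tendsto 0
  simpa using h.mono_left nhdsWithin_le_nhds

lemma abs_log_le_one_sub_log {t : ℝ} (ht : 0 < t) (ht1 : t ≤ 1) : |log t| ≤ 1 - log t := by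
  rw [abs_of_nonpos (log_nonpos ht.le ht1)]
  linarith

lemma Complex.re_div_ofReal_mul_exp_arg_mul_I (c : ℂ) (t : ℝ) :
    (c / (t * Complex.exp (c.arg * Complex.I))).re = ‖c‖ / t := by
  have hpolar := Complex.norm_mul_exp_arg_mul_I c
  have hu := Complex.exp_ne_zero (c.arg * Complex.I)
  generalize Complex.exp (c.arg * Complex.I) = u at hpolar hu ⊢
  have hc : c / (t * u) = ((‖c‖ / t : ℝ) : ℂ) := by
    nth_rewrite 1 [← hpolar]
    push_cast
    field_simp
  rw [hc, Complex.ofReal_re]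

lemma eq_zero_of_abs_log_add_re_div_le (c : ℂ) {β C ε : ℝ} (hε : 0 < ε)
    (hbound : ∀ w : ℂ, w ≠ 0 → ‖w‖ < ε →
      |β * log (‖w‖ ^ 2) + 2 * (c / w).re| ≤ C * (1 - log ‖w‖)) :
    c = 0 := by
  set K := C + 2 * |β|
  have hray : ∀ t ∈ Set.Ioo 0 (min ε 1), 2 * ‖c‖ ≤ K * (t + negMulLog t) := by
    rintro t ⟨ht, htε⟩
    set w : ℂ := t * Complex.exp (c.arg * Complex.I)
    have hw : ‖w‖ = t := by simp [w, abs_of_pos ht]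
    have hw0 : w ≠ 0 := norm_pos_iff.mp (hw ▸ ht)
    have h := hbound w hw0 (hw ▸ htε.trans_le (min_le_left _ _))
    rw [hw, Complex.re_div_ofReal_mul_exp_arg_mul_I c t] at h
    have hlog : |β * log (t ^ 2)| ≤ 2 * |β| * (1 - log t) := by
      rw [abs_mul, log_pow, abs_mul]
      have := abs_log_le_one_sub_log ht (htε.le.trans (min_le_right _ _))
      norm_num
      nlinarith [abs_nonneg β]
    have hdiv : 2 * (‖c‖ / t) ≤ K * (1 - log t) := by
      have := abs_sub (β * log (t ^ 2) + 2 * (‖c‖ / t)) (β * log (t ^ 2))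
      simp only [add_sub_cancel_left] at this
      have hpos : 0 ≤ 2 * (‖c‖ / t) := by positivity
      rw [abs_of_nonneg hpos] at this
      linarith
    calc 2 * ‖c‖ = t * (2 * (‖c‖ / t)) := by field_simp
      _ ≤ t * (K * (1 - log t)) := mul_le_mul_of_nonneg_left hdiv ht.le
      _ = K * (t + negMulLog t) := by rw [negMulLog]; ring
  have hlim : Tendsto (fun t ↦ K * (t + negMulLog t)) (𝓝[>] 0) (𝓝 0) := by
    simpa using tendsto_add_negMulLog_nhdsGT_zero.const_mul K
  have hle : 2 * ‖c‖ ≤ 0 :=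
    ge_of_tendsto hlim (eventually_of_mem (Ioo_mem_nhdsGT (lt_min hε one_pos)) hray)
  exact norm_eq_zero.mp (le_antisymm (by linarith) (norm_nonneg c))

theorem stmt15_general (m : ℕ) (β : ℝ) (a : (Fin m → ℂ) → ℂ)
    (hgrowth : ∀ z' ∈ pd15 m, ∃ C > (0 : ℝ), ∃ ε > (0 : ℝ), ∀ w : ℂ,
      w ≠ 0 → ‖w‖ < ε →
        |β * Real.log (‖w‖ ^ 2) + 2 * (a z' / w).re| ≤ C * (1 - Real.log ‖w‖)) :
    (∀ z' ∈ pd15 m, a z' = 0) ∧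
    -- consequently the current T_v (with density a along B) vanishes
    (∀ ψ : (Fin m → ℂ) → ℂ, (∫ z' in pd15 m, a z' * ψ z') = 0) := by
  have ha_zero : ∀ z' ∈ pd15 m, a z' = 0 := fun z' hz' ↦ by
    obtain ⟨C, -, ε, hε, hbound⟩ := hgrowth z' hz'
    exact eq_zero_of_abs_log_add_re_div_le (a z') hε hbound
  refine ⟨ha_zero, fun ψ ↦ setIntegral_eq_zero_of_forall_eq_zero fun z' hz' ↦ ?_⟩
  rw [ha_zero z' hz', zero_mul]

/-- Suppose the weight functions of two singular hermitian metrics on isomorphic line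
    bundles over Z \ B differ, in coordinates (z¹, z') adapted to the smooth
    hypersurface B = {z¹ = 0}, by χ(z¹, z') = β log|z¹|² + 2 Re(a(z')/z¹) with a
    holomorphic.  If χ has at worst logarithmic poles along B, i.e. for every z' there
    are C > 0 and ε > 0 with |χ(z¹, z')| ≤ C(1 - log|z¹|) for 0 < |z¹| < ε, then
    a ≡ 0; consequently the associated current T_v vanishes (its density a is zero)
    and the Chern current difference equals β[B]. -/
theorem stmt15 (m : ℕ) (β : ℝ) (a : (Fin m → ℂ) → ℂ)
    (ha : DifferentiableOn ℂ a (pd15 m))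
    (hgrowth : ∀ z' ∈ pd15 m, ∃ C > (0 : ℝ), ∃ ε > (0 : ℝ), ∀ w : ℂ,
      w ≠ 0 → ‖w‖ < ε →
        |β * Real.log (‖w‖ ^ 2) + 2 * (a z' / w).re| ≤ C * (1 - Real.log ‖w‖)) :
    (∀ z' ∈ pd15 m, a z' = 0) ∧
    -- consequently the current T_v (with density a along B) vanishes
    (∀ ψ : (Fin m → ℂ) → ℂ, (∫ z' in pd15 m, a z' * ψ z') = 0) :=
  stmt15_general m β a hgrowth
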